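/- arXiv:1708.01607 — 3 statements merged into one kernel-verified Lean document; each statement's English description precedes it below -/
import Mathlib

section
/- For all integers k ≥ r ≥ 2, β_1(k, r) = 2(r-1). That is, the minimum number of vertices in a K_r-free k-partite graph such that the deletion of any one part leaves a graph containing a clique of size r-1, equals 2r-2. -/
/-!
Lower bound: for a set `B` of vertices let `U(B)` be the clique of vertices outside `B` adjacent
to all other vertices outside `B`. If `S` is an `r`-clique missing some `a ∈ U(B)`, then
`(S \ B) ∪ (U(B) \ S)` is a clique, so `K_{r+1}`-freeness gives `|U(B) \ S| ≤ |S ∩ B|`, and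
`U(B) ∩ S ⊆ U(B \ S)`. Hence `|U(B)| > |B|` would propagate to the strictly smaller set `B \ S`,
so `|U(B)| ≤ |B|` always; for an `r`-clique `T` this gives `r ≤ |U(Tᶜ)| ≤ n - r`.

Upper bound: take two `(r-1)`-cliques `a_0, …, a_{r-2}` and `b_0, …, b_{r-2}` with `a_i ~ b_m`
iff `i < m`, and put `a_i` in part `i`, `b_m` in part `m + 1`.
-/

open SimpleGraph

/-- `n` is the number of vertices of a `K_r`-free `k`-partite graph in which
the subgraph induced by any `k - i` parts contains a clique of size `r - 1`. -/
def BetaWitness (i k r n : ℕ) : Prop :=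
  ∃ (G : SimpleGraph (Fin n)) (P : Fin n → Fin k),
    (∀ u v, G.Adj u v → P u ≠ P v) ∧ G.CliqueFree r ∧
    ∀ S : Finset (Fin k), S.card = i →
      ∃ T : Finset (Fin n), G.IsNClique (r - 1) T ∧ ∀ v ∈ T, P v ∉ S

noncomputable def beta (i k r : ℕ) : ℕ := sInf {n | BetaWitness i k r n}

open Finset

namespace SimpleGraph

theorem IsClique.card_le_of_cliqueFree {V : Type*} {G : SimpleGraph V} {n : ℕ}
    (hG : G.CliqueFree (n + 1)) {s : Finset V} (hs : G.IsClique (s : Set V)) : #s ≤ n := by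
  by_contra! h
  obtain ⟨t, hts, ht⟩ := exists_subset_card_eq (Nat.succ_le_of_lt h)
  exact hG t ⟨hs.subset hts, ht⟩

section UniversalOutside

variable {V : Type*} [Fintype V] [DecidableEq V] (G : SimpleGraph V)

open Classical in
/-- The universal vertices of `G.induce Bᶜ`. -/
noncomputable def universalOutside (B : Finset V) : Finset V :=
  {x ∈ Bᶜ | ∀ w ∉ B, w ≠ x → G.Adj x w}

variable {G}

theorem mem_universalOutside {B : Finset V} {x : V} :
    x ∈ G.universalOutside B ↔ x ∉ B ∧ ∀ w ∉ B, w ≠ x → G.Adj x w := by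
  simp [universalOutside]

theorem isClique_universalOutside (B : Finset V) : G.IsClique (G.universalOutside B : Set V) :=
  fun _ hx _ hy hxy ↦
    (mem_universalOutside.1 hx).2 _ (mem_universalOutside.1 hy).1 hxy.symm

theorem universalOutside_inter_subset {B S : Finset V} (hS : G.IsClique (S : Set V)) :
    G.universalOutside B ∩ S ⊆ G.universalOutside (B \ S) := by
  intro x hx
  obtain ⟨hxU, hxS⟩ := mem_inter.1 hx
  obtain ⟨hxB, hxadj⟩ := mem_universalOutside.1 hxU
  refine mem_universalOutside.2 ⟨fun h ↦ hxB (mem_sdiff.1 h).1, fun w hw hwx ↦ ?_⟩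
  by_cases hwB : w ∈ B
  · exact hS hxS (by_contra fun hwS ↦ hw (mem_sdiff.2 ⟨hwB, hwS⟩)) hwx.symm
  · exact hxadj w hwB hwx

theorem card_universalOutside_sdiff_le {r : ℕ} (hG : G.CliqueFree (r + 1)) {B S : Finset V}
    (hS : G.IsNClique r S) : #(G.universalOutside B \ S) ≤ #(S ∩ B) := by
  set U := G.universalOutside B
  have hclique : G.IsClique ((S \ B ∪ U \ S : Finset V) : Set V) := by
    intro x hx y hy hxy
    simp only [coe_union, coe_sdiff, Set.mem_union, Set.mem_sdiff, mem_coe] at hx hy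
    rcases hx with ⟨hxS, hxB⟩ | ⟨hxU, -⟩ <;> rcases hy with ⟨hyS, hyB⟩ | ⟨hyU, -⟩
    · exact hS.1 hxS hyS hxy
    · exact ((mem_universalOutside.1 hyU).2 x hxB hxy).symm
    · exact (mem_universalOutside.1 hxU).2 y hyB hxy.symm
    · exact isClique_universalOutside B hxU hyU hxy
  have hdisj : Disjoint (S \ B) (U \ S) :=
    Finset.disjoint_left.2 fun _ hx hx' ↦ (mem_sdiff.1 hx').2 (mem_sdiff.1 hx).1
  have hle := hclique.card_le_of_cliqueFree hG
  have hsplit := card_sdiff_add_card_inter S B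
  rw [card_union_of_disjoint hdisj] at hle
  have := hS.2
  omega

theorem card_universalOutside_le {r : ℕ} (hG : G.CliqueFree (r + 1))
    (hcover : ∀ v, ∃ S, G.IsNClique r S ∧ v ∉ S) (B : Finset V) :
    #(G.universalOutside B) ≤ #B := by
  induction hB : #B using Nat.strong_induction_on generalizing B with
  | _ b ih =>
    by_contra! hlt
    obtain ⟨a, ha⟩ := card_pos.1 ((Nat.zero_le _).trans_lt hlt)
    obtain ⟨S, hS, haS⟩ := hcover a
    have hdiff := card_universalOutside_sdiff_le (B := B) hG hS
    have hU := card_sdiff_add_card_inter (G.universalOutside B) S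
    have hB' := card_sdiff_add_card_inter B S
    have ha' : 0 < #(G.universalOutside B \ S) := card_pos.2 ⟨a, mem_sdiff.2 ⟨ha, haS⟩⟩
    have hmono := card_le_card (universalOutside_inter_subset (B := B) hS.1)
    rw [inter_comm S B] at hdiff
    exact absurd (ih _ (by omega) (B \ S) rfl) (by omega)

theorem two_mul_le_card_of_forall_exists_isNClique_notMem {r : ℕ} (hG : G.CliqueFree (r + 1))
    (hcover : ∀ v, ∃ S, G.IsNClique r S ∧ v ∉ S) {T : Finset V} (hT : G.IsNClique r T) :
    2 * r ≤ Fintype.card V := by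
  have hsub : T ⊆ G.universalOutside Tᶜ := fun x hx ↦
    mem_universalOutside.2 ⟨by simpa using hx, fun w hw hwx ↦ hT.1 hx (by simpa using hw) hwx.symm⟩
  have hbound := (card_le_card hsub).trans (card_universalOutside_le hG hcover Tᶜ)
  rw [card_compl, hT.2] at hbound
  have hT_le := hT.2 ▸ card_le_univ T
  omega

end UniversalOutside

section HalfGraph

/-- `inl i` is `a_i` and `inr m` is `b_m`. -/
def cliqueHalfGraph (s : ℕ) : SimpleGraph (Fin s ⊕ Fin s) where
  Adj
    | .inl i, .inl j | .inr i, .inr j => i ≠ j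
    | .inl i, .inr m | .inr m, .inl i => i < m
  symm := ⟨by rintro (i | i) (j | j) h <;> first | exact h | exact Ne.symm h⟩
  loopless := ⟨by rintro (i | i) h <;> exact h rfl⟩

variable {s : ℕ}

def cliqueHalfGraph.part : Fin s ⊕ Fin s → ℕ := Sum.elim (fun i ↦ i) (fun m ↦ m + 1)

theorem cliqueHalfGraph.part_le (v : Fin s ⊕ Fin s) : part v ≤ s := by
  rcases v with i | m <;> simp only [part, Sum.elim_inl, Sum.elim_inr] <;> omega

theorem cliqueHalfGraph.part_ne_of_adj {u v : Fin s ⊕ Fin s} (h : (cliqueHalfGraph s).Adj u v) :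
    part u ≠ part v := by
  rcases u with i | i <;> rcases v with j | j <;>
    simp only [cliqueHalfGraph, part, Sum.elim_inl, Sum.elim_inr, ne_eq, Fin.val_inj,
      Fin.lt_def] at h ⊢ <;> omega

theorem cliqueFree_cliqueHalfGraph : (cliqueHalfGraph s).CliqueFree (s + 1) := by
  let index : (cliqueHalfGraph s).Coloring (Fin s) := Coloring.mk (Sum.elim id id) <| by
    rintro (i | i) (j | j) h <;> simp only [cliqueHalfGraph, Sum.elim_inl, Sum.elim_inr, id] at h ⊢
    all_goals first | exact h | exact h.ne | exact h.ne'
  exact index.colorable.cliqueFree (by simp)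

def cliqueHalfGraph.cliqueAvoiding (j : ℕ) : Finset (Fin s ⊕ Fin s) :=
  ({i | (i : ℕ) < j} : Finset (Fin s)).disjSum {m | ¬(m : ℕ) < j}

theorem cliqueHalfGraph.isNClique_cliqueAvoiding (j : ℕ) :
    (cliqueHalfGraph s).IsNClique s (cliqueAvoiding j) := by
  refine ⟨?_, by
    rw [cliqueAvoiding, card_disjSum, card_filter_add_card_filter_not, card_univ, Fintype.card_fin]⟩
  rintro (i | i) hi (m | m) hm h <;>
    simp only [cliqueAvoiding, mem_coe, inl_mem_disjSum, inr_mem_disjSum, mem_filter_univ] at hi hm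
  · exact fun hx ↦ h (congrArg _ hx)
  · exact Fin.lt_def.2 (by omega)
  · exact Fin.lt_def.2 (by omega)
  · exact fun hx ↦ h (congrArg _ hx)

theorem cliqueHalfGraph.part_ne_of_mem_cliqueAvoiding {j : ℕ} {v : Fin s ⊕ Fin s}
    (hv : v ∈ cliqueAvoiding j) : part v ≠ j := by
  rcases v with i | m <;> simp [cliqueAvoiding, part] at hv ⊢ <;> omega

end HalfGraph

end SimpleGraph

theorem BetaWitness.of_fintype {V : Type*} [Fintype V] {i k r : ℕ} (G : SimpleGraph V)
    (P : V → Fin k) (hP : ∀ u v, G.Adj u v → P u ≠ P v) (hG : G.CliqueFree r)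
    (hcl : ∀ S : Finset (Fin k), #S = i →
      ∃ T : Finset V, G.IsNClique (r - 1) T ∧ ∀ v ∈ T, P v ∉ S) :
    BetaWitness i k r (Fintype.card V) := by
  let e := Fintype.equivFin V
  refine ⟨G.map e.toEmbedding, P ∘ e.symm, ?_, hG.comap (Iso.map e G).symm.isContained, ?_⟩
  · rintro _ _ ⟨-, u, v, huv, rfl, rfl⟩
    simpa using hP u v huv
  · intro S hS
    obtain ⟨T, hT, hTS⟩ := hcl S hS
    refine ⟨T.map e.toEmbedding, hT.map, fun _ hv ↦ ?_⟩
    obtain ⟨v, hvT, rfl⟩ := mem_map.1 hv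
    simpa using hTS v hvT

theorem betaWitness_cliqueHalfGraph {k s : ℕ} (hsk : s < k) : BetaWitness 1 k (s + 1) (2 * s) := by
  open cliqueHalfGraph in
  have := BetaWitness.of_fintype (i := 1) (cliqueHalfGraph s)
    (fun v ↦ ⟨part v, (part_le v).trans_lt hsk⟩)
    (fun u v huv h ↦ part_ne_of_adj huv (Fin.val_eq_of_eq h)) cliqueFree_cliqueHalfGraph
    (fun S hS ↦ by
      obtain ⟨j, rfl⟩ := card_eq_one.1 hS
      exact ⟨cliqueAvoiding j, isNClique_cliqueAvoiding j,
        fun v hv h ↦ part_ne_of_mem_cliqueAvoiding hv (Fin.val_eq_of_eq (mem_singleton.1 h))⟩)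
  simpa [two_mul] using this

theorem BetaWitness.two_mul_le {k s n : ℕ} (hk : 0 < k) (h : BetaWitness 1 k (s + 1) n) :
    2 * s ≤ n := by
  obtain ⟨G, P, -, hG, hcl⟩ := h
  have hcover (v : Fin n) : ∃ T, G.IsNClique s T ∧ v ∉ T := by
    obtain ⟨T, hT, hTP⟩ := hcl {P v} (card_singleton _)
    exact ⟨T, hT, fun hv ↦ hTP v hv (mem_singleton_self _)⟩
  obtain ⟨T, hT, -⟩ := hcl {⟨0, hk⟩} (card_singleton _)
  simpa using two_mul_le_card_of_forall_exists_isNClique_notMem hG hcover hT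

theorem stmt_7 (k r : ℕ) (hr : 2 ≤ r) (hkr : r ≤ k) :
    beta 1 k r = 2 * (r - 1) := by
  obtain ⟨s, rfl⟩ : ∃ s, r = s + 1 := ⟨r - 1, by omega⟩
  have hwitness := betaWitness_cliqueHalfGraph (k := k) (by omega : s < k)
  rw [Nat.add_sub_cancel]
  exact le_antisymm (Nat.sInf_le hwitness)
    (le_csInf ⟨_, hwitness⟩ fun _ hn ↦ hn.two_mul_le (by omega))
end

section
/- For all integers k ≥ r ≥ 3, k · β_1(k-1, r-1) ≤ α(k, r) ≤ (k-1) · β_2(k, r-1). -/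
open SimpleGraph

/-- A `k`-partite graph with partition map `P` is `K_r`-partite-saturated. -/
def PartiteSaturated {V : Type} (k r : ℕ) (G : SimpleGraph V) (P : V → Fin k) : Prop :=
  (∀ u v, G.Adj u v → P u ≠ P v) ∧ G.CliqueFree r ∧
  ∀ u v, P u ≠ P v → ¬ G.Adj u v →
    ¬ (G ⊔ SimpleGraph.fromEdgeSet {s(u, v)}).CliqueFree r

/-- `m` is the number of edges between an independent transversal `X` and its complement
in a `K_r`-partite-saturated `k`-partite graph. -/
def AlphaWitness (k r m : ℕ) : Prop :=
  ∃ (n : ℕ) (G : SimpleGraph (Fin n)) (P : Fin n → Fin k) (x : Fin k → Fin n),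
    PartiteSaturated k r G P ∧ (∀ i, P (x i) = i) ∧
    (∀ i j, ¬ G.Adj (x i) (x j)) ∧
    m = ∑ i : Fin k, (G.neighborSet (x i)).ncard

noncomputable def alpha (k r : ℕ) : ℕ := sInf {m | AlphaWitness k r m}

/-!
Lower bound: in a saturated graph with independent transversal `x`, the neighbourhood of `x i`,
split along the other `k - 1` parts, is `K_{r-1}`-free (with `x i` it would give a `K_r`), and
for every `j ≠ i` the `K_r` created by the non-edge `x i x j` leaves a `K_{r-2}` of common
neighbours, which avoids part `j`. So every neighbourhood has at least `β₁(k-1, r-1)` vertices.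

Upper bound: saturate an optimal `β₂(k, r-1)` graph to a `K_{r-1}`-partite-saturated graph `H`,
then add `x 1, …, x k` with `x i` joined to all of `H` outside part `i`. A non-edge inside `H`
closes a `K_{r-1}` in `H`, which misses some part `i` since `r - 1 < k`, and `x i` extends it;
a non-edge `x i x j` is closed by a `K_{r-2}` avoiding parts `i` and `j`. Each vertex of `H` has
exactly `k - 1` neighbours among the `x i`.
-/

open Finset

namespace SimpleGraph

variable {V : Type*} {G : SimpleGraph V} {n : ℕ}

theorem CliqueFree.not_cliqueFree_sup_edge_iff (hG : G.CliqueFree n) {u v : V} (huv : u ≠ v) :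
    ¬ (G ⊔ edge u v).CliqueFree n ↔
      ∃ s : Finset V, G.IsNClique (n - 2) s ∧ ∀ w ∈ s, G.Adj u w ∧ G.Adj v w := by
  classical
  constructor
  · intro h
    obtain ⟨t, ht⟩ := not_forall_not.1 h
    have hu := hG.mem_of_sup_edge_isNClique ht
    have hv := hG.mem_of_sup_edge_isNClique (edge_comm u v ▸ ht)
    have hcu : G.IsClique ((t : Set V) \ {u}) := ht.1.sdiff_of_sup_edge
    have hcv : G.IsClique ((t : Set V) \ {v}) := (edge_comm u v ▸ ht).1.sdiff_of_sup_edge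
    refine ⟨(t.erase u).erase v, ?_, fun w hw => ?_⟩
    · rw [show n - 2 = n - 1 - 1 by omega]
      exact (ht.erase_of_sup_edge_of_mem hu).erase_of_mem (mem_erase.2 ⟨huv.symm, hv⟩)
    · obtain ⟨hwv, hwu, hw⟩ : w ≠ v ∧ w ≠ u ∧ w ∈ t := by simpa using hw
      exact ⟨hcv ⟨hu, huv⟩ ⟨hw, hwv⟩ hwu.symm, hcu ⟨hv, huv.symm⟩ ⟨hw, hwu⟩ hwv.symm⟩
  · rintro ⟨s, hs, hadj⟩
    have hn : 2 ≤ n := by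
      by_contra hn
      exact (cliqueFree_one.1 (hG.mono (by omega))).false u
    have hsv : (G ⊔ edge u v).IsNClique (n - 2 + 1) (insert v s) :=
      (hs.mono le_sup_left).insert fun w hw => Or.inl (hadj w hw).2
    have hsuv := hsv.insert (a := u) fun w hw => by
      rcases mem_insert.1 hw with rfl | hw
      · exact Or.inr ((edge_adj _ _ _ _).2 ⟨Or.inl ⟨rfl, rfl⟩, huv⟩)
      · exact Or.inl (hadj w hw).1
    rw [show n - 2 + 1 + 1 = n by omega] at hsuv
    exact hsuv.not_cliqueFree

theorem CliqueFree.induce_neighborSet (h : G.CliqueFree (n + 1)) (v : V) :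
    (G.induce (G.neighborSet v)).CliqueFree n := by
  classical
  intro t ht
  rw [isNClique_induce_iff] at ht
  refine h _ (ht.insert (a := v) fun w hw => ?_)
  obtain ⟨w, -, rfl⟩ := mem_map.1 hw
  exact w.2

theorem IsNClique.exists_induce {s : Set V} {t : Finset V} (ht : G.IsNClique n t)
    (hts : ∀ w ∈ t, w ∈ s) :
    ∃ t' : Finset s, (G.induce s).IsNClique n t' ∧ t'.map (.subtype _) = t := by
  classical
  have hmap : (t.subtype (· ∈ s)).map (.subtype _) = t := by
    rw [subtype_map, filter_true_of_mem hts]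
  exact ⟨_, (isNClique_induce_iff _ _ _).2 (by rwa [hmap]), hmap⟩

end SimpleGraph

theorem BetaWitness.betaWitness_beta {i k r n : ℕ} (h : BetaWitness i k r n) :
    BetaWitness i k r (beta i k r) :=
  Nat.sInf_mem (s := {n | BetaWitness i k r n}) ⟨n, h⟩

theorem AlphaWitness.alphaWitness_alpha {k r m : ℕ} (h : AlphaWitness k r m) :
    AlphaWitness k r (alpha k r) :=
  Nat.sInf_mem (s := {m | AlphaWitness k r m}) ⟨m, h⟩

def IsBetaGraph {V ι : Type*} (i r : ℕ) (G : SimpleGraph V) (P : V → ι) : Prop :=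
  (∀ u v, G.Adj u v → P u ≠ P v) ∧ G.CliqueFree r ∧
    ∀ S : Finset ι, S.card = i → ∃ T : Finset V, G.IsNClique (r - 1) T ∧ ∀ v ∈ T, P v ∉ S

section Beta

variable {V W ι κ : Type*} {i r : ℕ} {G : SimpleGraph V} {P : V → ι}

theorem IsBetaGraph.map_equiv (h : IsBetaGraph i r G P) (e : V ≃ W) (f : ι ≃ κ) :
    IsBetaGraph i r (G.map e) (f ∘ P ∘ e.symm) := by
  classical
  obtain ⟨hP, hF, hT⟩ := h
  refine ⟨?_, hF.comap ⟨(Iso.map e G).symm.toEmbedding.toCopy⟩, fun S hS => ?_⟩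
  · rintro _ _ ⟨-, a, b, hab, rfl, rfl⟩
    simpa using hP a b hab
  · obtain ⟨T, hTc, hTS⟩ := hT (S.map f.symm.toEmbedding) (by rw [card_map, hS])
    refine ⟨T.map e.toEmbedding, hTc.map (f := e.toEmbedding), fun v hv => ?_⟩
    obtain ⟨w, hw, rfl⟩ := mem_map.1 hv
    simpa [← Equiv.eq_symm_apply] using hTS w hw

theorem IsBetaGraph.betaWitness [Fintype V] [Fintype ι] {k : ℕ} (h : IsBetaGraph i r G P)
    (hι : Fintype.card ι = k) : BetaWitness i k r (Fintype.card V) :=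
  ⟨_, _, h.map_equiv (Fintype.equivFin V) (Fintype.equivFinOfCardEq hι)⟩

def disjointCliques (σ : Type*) (m : ℕ) : SimpleGraph (σ × Fin m) where
  Adj p q := p.1 = q.1 ∧ p.2 ≠ q.2
  symm := ⟨fun _ _ h => ⟨h.1.symm, h.2.symm⟩⟩
  loopless := ⟨fun _ h => h.2 rfl⟩

theorem disjointCliques_cliqueFree (σ : Type*) (m : ℕ) :
    (disjointCliques σ m).CliqueFree (m + 1) := by
  intro T hT
  have hinj : Set.InjOn Prod.snd (T : Set (σ × Fin m)) := fun p hp q hq hpq =>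
    by_contra fun hne => (hT.1 hp hq hne).2 hpq
  have := card_le_card_of_injOn Prod.snd (fun _ _ => mem_coe.2 (mem_univ _)) hinj
  simp [hT.2] at this

theorem exists_betaWitness {k : ℕ} (hr : 0 < r) (hk : i + (r - 1) ≤ k) :
    ∃ n, BetaWitness i k r n := by
  -- one copy of `K_{r-1}` for each `i`-set `S` of parts, placed in parts outside `S`
  have hg : ∀ S : {S : Finset (Fin k) // S.card = i},
      ∃ g : Fin (r - 1) ↪ Fin k, ∀ a, g a ∉ S.1 := by
    intro S
    obtain ⟨g⟩ := Function.Embedding.nonempty_of_card_le (α := Fin (r - 1))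
      (β := {j // j ∉ S.1}) (by simp [Fintype.card_subtype_compl, S.2]; omega)
    exact ⟨g.trans (.subtype _), fun a => (g a).2⟩
  choose g hg using hg
  refine ⟨_, IsBetaGraph.betaWitness (G := disjointCliques _ (r - 1))
    (P := fun p => g p.1 p.2) ⟨?_, ?_, fun S hS => ?_⟩ (Fintype.card_fin k)⟩
  · rintro ⟨S, a⟩ ⟨_, b⟩ ⟨rfl, hab⟩
    exact (g S).injective.ne hab
  · simpa [Nat.sub_add_cancel hr] using disjointCliques_cliqueFree _ (r - 1)
  · refine ⟨univ.map (.sectR ⟨S, hS⟩ _), ⟨?_, by simp⟩, by simpa using hg ⟨S, hS⟩⟩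
    intro p hp q hq hpq
    simp only [coe_map, coe_univ, Set.image_univ, Set.mem_range] at hp hq
    obtain ⟨a, rfl⟩ := hp
    obtain ⟨b, rfl⟩ := hq
    exact ⟨rfl, fun hab => hpq (congrArg _ hab)⟩

end Beta

section Saturated

variable {V W : Type} {k r : ℕ} {G : SimpleGraph V} {P : V → Fin k}

theorem partiteSaturated_iff :
    PartiteSaturated k r G P ↔ (∀ u v, G.Adj u v → P u ≠ P v) ∧ G.CliqueFree r ∧
      ∀ u v, P u ≠ P v → ¬ G.Adj u v →
        ∃ s : Finset V, G.IsNClique (r - 2) s ∧ ∀ w ∈ s, G.Adj u w ∧ G.Adj v w :=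
  and_congr_right fun _ => and_congr_right fun hF => forall₂_congr fun _ _ =>
    forall_congr' fun hP => forall_congr' fun _ =>
      hF.not_cliqueFree_sup_edge_iff (ne_of_apply_ne P hP)

theorem PartiteSaturated.map_equiv (h : PartiteSaturated k r G P) (e : V ≃ W) :
    PartiteSaturated k r (G.map e) (P ∘ e.symm) := by
  obtain ⟨hP, hF, hsat⟩ := partiteSaturated_iff.1 h
  refine partiteSaturated_iff.2 ⟨?_, hF.comap ⟨(Iso.map e G).symm.toEmbedding.toCopy⟩, ?_⟩
  · rintro _ _ ⟨-, a, b, hab, rfl, rfl⟩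
    simpa using hP a b hab
  · intro u v huv hnadj
    obtain ⟨a, rfl⟩ := e.surjective u
    obtain ⟨b, rfl⟩ := e.surjective v
    simp only [Function.comp_apply, Equiv.symm_apply_apply] at huv
    obtain ⟨s, hs, hadj⟩ := hsat a b huv ((Iso.map e G).map_adj_iff.not.1 hnadj)
    refine ⟨s.map e.toEmbedding, hs.map (f := e.toEmbedding), fun w hw => ?_⟩
    obtain ⟨w, hws, rfl⟩ := mem_map.1 hw
    exact ⟨(Iso.map e G).map_adj_iff.2 (hadj w hws).1, (Iso.map e G).map_adj_iff.2 (hadj w hws).2⟩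

theorem PartiteSaturated.alphaWitness [Fintype V] {x : Fin k → V} (h : PartiteSaturated k r G P)
    (hx : ∀ i, P (x i) = i) (hind : ∀ i j, ¬ G.Adj (x i) (x j)) :
    AlphaWitness k r (∑ i, (G.neighborSet (x i)).ncard) := by
  let e := Fintype.equivFin V
  refine ⟨_, G.map e, P ∘ e.symm, e ∘ x, h.map_equiv e, by simp [hx],
    fun i j => (Iso.map e G).map_adj_iff.not.2 (hind i j), sum_congr rfl fun i _ => ?_⟩
  rw [Function.comp_apply, neighborSet_map_equiv, Equiv.symm_apply_apply,
    ← Equiv.image_eq_preimage_symm, Set.ncard_image_of_injective _ e.injective]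

theorem exists_partiteSaturated_le [Finite V] {G₀ : SimpleGraph V}
    (hP : ∀ u v, G₀.Adj u v → P u ≠ P v) (hF : G₀.CliqueFree r) :
    ∃ G, G₀ ≤ G ∧ PartiteSaturated k r G P := by
  obtain ⟨G, hle, hmax⟩ := (Set.toFinite {G : SimpleGraph V |
    (∀ u v, G.Adj u v → P u ≠ P v) ∧ G.CliqueFree r}).exists_le_maximal ⟨hP, hF⟩
  refine ⟨G, hle, hmax.1.1, hmax.1.2, fun u v huv hnadj hcf => ?_⟩
  refine hmax.not_prop_of_gt (G.lt_sup_edge u v (ne_of_apply_ne P huv) hnadj) ⟨?_, hcf⟩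
  rintro a b (hab | hab)
  · exact hmax.1.1 a b hab
  · obtain ⟨⟨rfl, rfl⟩ | ⟨rfl, rfl⟩, -⟩ := (edge_adj _ _ _ _).1 hab
    exacts [huv, huv.symm]

theorem beta_le_ncard_neighborSet [Fintype V] {x : Fin k → V} (h : PartiteSaturated k r G P)
    (hx : ∀ i, P (x i) = i) (hind : ∀ i j, ¬ G.Adj (x i) (x j)) (i₀ : Fin k) :
    beta 1 (k - 1) (r - 1) ≤ (G.neighborSet (x i₀)).ncard := by
  classical
  obtain ⟨hP, hF, hsat⟩ := partiteSaturated_iff.1 h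
  set N := G.neighborSet (x i₀)
  have hN : ∀ v : N, P v ≠ i₀ := fun v hv => hP _ _ v.2 (by rw [hx, hv])
  have hβ : IsBetaGraph 1 (r - 1) (G.induce N) (fun v => (⟨P v, hN v⟩ : {j // j ≠ i₀})) := by
    refine ⟨fun u v huv h => hP _ _ huv (congrArg Subtype.val h),
      (hF.mono (by omega)).induce_neighborSet _, fun S hS => ?_⟩
    obtain ⟨j, rfl⟩ := card_eq_one.1 hS
    obtain ⟨s, hs, hadj⟩ := hsat (x i₀) (x j) (by rw [hx, hx]; exact j.2.symm) (hind _ _)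
    obtain ⟨t, ht, rfl⟩ := hs.exists_induce fun w hw => (hadj w hw).1
    refine ⟨t, by rwa [Nat.sub_sub], fun v hv hvj => ?_⟩
    refine hP _ _ (hadj v (mem_map_of_mem _ hv)).2 ?_
    rw [hx, ← mem_singleton.1 hvj]
  have : beta 1 (k - 1) (r - 1) ≤ Fintype.card N :=
    Nat.sInf_le (hβ.betaWitness (by simp [Fintype.card_subtype_compl]))
  rwa [← Nat.card_coe_set_eq, Nat.card_eq_fintype_card]

end Saturated

theorem mul_beta_le_of_alphaWitness {k r m : ℕ} (h : AlphaWitness k r m) :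
    k * beta 1 (k - 1) (r - 1) ≤ m := by
  obtain ⟨n, G, P, x, hG, hx, hind, rfl⟩ := h
  simpa using card_nsmul_le_sum univ _ _ fun i _ => beta_le_ncard_neighborSet hG hx hind i

section Transversal

variable {V ι : Type*} (H : SimpleGraph V) (Q : V → ι)

def addTransversal : SimpleGraph (V ⊕ ι) where
  Adj
    | .inl a, .inl b => H.Adj a b
    | .inl a, .inr i | .inr i, .inl a => Q a ≠ i
    | .inr _, .inr _ => False
  symm := ⟨by rintro (a | i) (b | j) h <;> simp_all [H.adj_comm]⟩
  loopless := ⟨by rintro (a | i) h <;> simp_all⟩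

@[simp] lemma addTransversal_adj_inl_inl {a b : V} :
    (addTransversal H Q).Adj (.inl a) (.inl b) ↔ H.Adj a b := .rfl

@[simp] lemma addTransversal_adj_inl_inr {a : V} {i : ι} :
    (addTransversal H Q).Adj (.inl a) (.inr i) ↔ Q a ≠ i := .rfl

@[simp] lemma addTransversal_adj_inr_inl {a : V} {i : ι} :
    (addTransversal H Q).Adj (.inr i) (.inl a) ↔ Q a ≠ i := .rfl

@[simp] lemma addTransversal_adj_inr_inr {i j : ι} :
    ¬ (addTransversal H Q).Adj (.inr i) (.inr j) := id

lemma map_inl_le_addTransversal : H.map Sum.inl ≤ addTransversal H Q := by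
  rintro _ _ ⟨-, a, b, hab, rfl, rfl⟩
  exact hab

variable {H Q}

lemma addTransversal_cliqueFree {n : ℕ} (hH : H.CliqueFree n) :
    (addTransversal H Q).CliqueFree (n + 1) := by
  intro T hT
  have hR : T.toRight.card ≤ 1 := card_le_one.2 fun i hi j hj => by_contra fun hij =>
    hT.1 (mem_toRight.1 hi) (mem_toRight.1 hj) (by simpa using hij)
  have hL : n ≤ T.toLeft.card := by
    have := card_toLeft_add_card_toRight (u := T)
    have := hT.2
    omega
  obtain ⟨C, hCT, hC⟩ := exists_subset_card_eq hL
  refine hH C ⟨fun a ha b hb hab => ?_, hC⟩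
  exact hT.1 (mem_toLeft.1 (hCT ha)) (mem_toLeft.1 (hCT hb)) (by simpa using hab)

lemma ncard_neighborSet_inr [Fintype V] [DecidableEq ι] (i : ι) :
    ((addTransversal H Q).neighborSet (.inr i)).ncard = #{a | Q a ≠ i} := by
  have : (addTransversal H Q).neighborSet (.inr i) = Sum.inl '' {a | Q a ≠ i} := by
    ext (a | j) <;> simp
  rw [this, Set.ncard_image_of_injective _ Sum.inl_injective, Set.ncard_eq_toFinset_card',
    Set.toFinset_ofPred]

lemma sum_ncard_neighborSet_inr [Fintype V] [Fintype ι] [DecidableEq ι] :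
    ∑ i, ((addTransversal H Q).neighborSet (.inr i)).ncard =
      (Fintype.card ι - 1) * Fintype.card V := by
  calc ∑ i, ((addTransversal H Q).neighborSet (.inr i)).ncard
      = ∑ a, #{i | Q a ≠ i} := by simp only [ncard_neighborSet_inr, card_filter]; exact sum_comm
    _ = (Fintype.card ι - 1) * Fintype.card V := by simp [filter_ne, mul_comm]

end Transversal

theorem partiteSaturated_addTransversal {V : Type} {k n : ℕ} {H : SimpleGraph V}
    {Q : V → Fin k} (hn : 2 ≤ n) (hnk : n < k) (hH : PartiteSaturated k n H Q)
    (hcl : ∀ S : Finset (Fin k), S.card = 2 → ∃ T, H.IsNClique (n - 1) T ∧ ∀ v ∈ T, Q v ∉ S) :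
    PartiteSaturated k (n + 1) (addTransversal H Q) (Sum.elim Q id) := by
  classical
  obtain ⟨hQ, hF, hsat⟩ := partiteSaturated_iff.1 hH
  refine partiteSaturated_iff.2 ⟨?_, addTransversal_cliqueFree hF, ?_⟩
  · rintro (a | i) (b | j) h
    exacts [hQ a b h, h, Ne.symm h, h.elim]
  · rintro (a | i) (b | j) hab hnadj
    · obtain ⟨s, hs, hadj⟩ := hsat a b hab hnadj
      have hcard : #((insert a (insert b s)).image Q) < k :=
        calc _ ≤ #(insert a (insert b s)) := card_image_le
          _ ≤ #(insert b s) + 1 := card_insert_le _ _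
          _ ≤ #s + 1 + 1 := Nat.add_le_add_right (card_insert_le _ _) 1
          _ < k := by rw [hs.2]; omega
      obtain ⟨i, -, hi⟩ := exists_mem_notMem_of_card_lt_card
        (s := (insert a (insert b s)).image Q) (t := univ) (by rwa [card_univ, Fintype.card_fin])
      simp only [image_insert, mem_insert, mem_image, not_or, not_exists, not_and] at hi
      obtain ⟨hai, hbi, hsi⟩ := hi
      have hs' := ((hs.map (f := .inl)).mono (map_inl_le_addTransversal H Q)).insert
        (a := .inr i) (by simpa using fun t ht => hsi t ht)
      refine ⟨_, by rwa [show n - 2 + 1 = n + 1 - 2 by omega] at hs', fun w hw => ?_⟩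
      rcases mem_insert.1 hw with rfl | hw
      · exact ⟨Ne.symm hai, Ne.symm hbi⟩
      · obtain ⟨t, ht, rfl⟩ := mem_map.1 hw
        exact hadj t ht
    · exact absurd hab (by simpa using hnadj)
    · exact absurd hab (by simpa [eq_comm] using hnadj)
    · obtain ⟨T, hT, hTS⟩ := hcl {i, j} (card_pair hab)
      refine ⟨T.map .inl, ?_, fun w hw => ?_⟩
      · exact (hT.map (f := .inl)).mono (map_inl_le_addTransversal H Q)
      · obtain ⟨t, ht, rfl⟩ := mem_map.1 hw
        simpa [not_or] using hTS t ht

theorem alphaWitness_of_betaWitness {k r n : ℕ} (hr : 3 ≤ r) (hkr : r ≤ k)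
    (h : BetaWitness 2 k (r - 1) n) : AlphaWitness k r ((k - 1) * n) := by
  obtain ⟨H₀, Q, hQ, hF, hcl⟩ := h
  obtain ⟨H, hle, hH⟩ := exists_partiteSaturated_le hQ hF
  have hG := partiteSaturated_addTransversal (by omega) (by omega) hH
    fun S hS => (hcl S hS).imp fun T hT => ⟨hT.1.mono hle, hT.2⟩
  rw [Nat.sub_add_cancel (by omega)] at hG
  simpa [sum_ncard_neighborSet_inr] using
    hG.alphaWitness (x := Sum.inr) (fun _ => rfl) fun _ _ => id

theorem stmt_10 (k r : ℕ) (hr : 3 ≤ r) (hkr : r ≤ k) :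
    k * beta 1 (k - 1) (r - 1) ≤ alpha k r ∧ alpha k r ≤ (k - 1) * beta 2 k (r - 1) := by
  obtain ⟨n, hn⟩ := exists_betaWitness (i := 2) (k := k) (r := r - 1) (by omega) (by omega)
  have hα := alphaWitness_of_betaWitness hr hkr hn.betaWitness_beta
  exact ⟨mul_beta_le_of_alphaWitness hα.alphaWitness_alpha, Nat.sInf_le hα⟩
end

section
/- For every k ≥ 3, α(k, 3) = 3(k - 1). -/
open SimpleGraph

/-!
For `r = 3`, saturation says that any two non-adjacent vertices in different parts have a common
neighbour. Lower bound: every `x i` has degree at least `2`. If some `x i` has exactly the two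
neighbours `s, s'`, then every `x j` is adjacent to `s` or `s'`, and a short case analysis with
triangle-freeness shows that `x j` has degree at least `3` unless `j` is the part of `s`, of `s'`,
or of a common neighbour of `x (P s)` and `x (P s')`. Hence the degree sum is at least `3k - 3`.
Upper bound: add to the transversal `x 0, …, x (k-1)` three vertices `y 0, y 1, y 2`, with `y t`
in part `t` and adjacent to every `x i` with `i ≠ t`; the `y t` contribute `3 (k - 1)` edges.
-/

namespace SimpleGraph

variable {V : Type} {G : SimpleGraph V} {u v w : V}

lemma CliqueFree.not_adj_of_adj_of_adj (hG : G.CliqueFree 3) (hu : G.Adj w u) (hv : G.Adj w v) :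
    ¬ G.Adj u v := by
  classical
  exact fun huv ↦ hG {w, u, v} (is3Clique_triple_iff.mpr ⟨hu, hv, huv⟩)

lemma CliqueFree.exists_adj_adj_of_not_cliqueFree_sup_edge (hG : G.CliqueFree 3)
    (h : ¬ (G ⊔ edge u v).CliqueFree 3) : ∃ w, G.Adj u w ∧ G.Adj v w := by
  classical
  obtain ⟨t, ht⟩ := not_forall_not.mp h
  have hu : u ∈ t := hG.mem_of_sup_edge_isNClique ht
  have hv : v ∈ t := hG.mem_of_sup_edge_isNClique (edge_comm u v ▸ ht)
  obtain ⟨w, hwt, hw⟩ : ∃ w ∈ t, w ∉ ({u, v} : Finset V) :=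
    Finset.exists_mem_notMem_of_card_lt_card <| by
      rw [ht.card_eq]; exact Finset.card_le_two.trans_lt (by norm_num)
  simp only [Finset.mem_insert, Finset.mem_singleton, not_or] at hw
  have huw := ht.isClique hu hwt (Ne.symm hw.1)
  have hvw := ht.isClique hv hwt (Ne.symm hw.2)
  simp only [sup_adj, edge_adj] at huw hvw
  exact ⟨w, huw.resolve_right (by tauto), hvw.resolve_right (by tauto)⟩

lemma not_cliqueFree_sup_edge_of_adj_adj (huv : u ≠ v) (hu : G.Adj u w) (hv : G.Adj v w) :
    ¬ (G ⊔ edge u v).CliqueFree 3 := by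
  classical
  refine fun h ↦ h {u, v, w} (is3Clique_triple_iff.mpr ⟨?_, Or.inl hu, Or.inl hv⟩)
  simp [edge_adj, huv]

lemma Iso.cliqueFree_iff {W : Type} {H : SimpleGraph W} (e : G ≃g H) {n : ℕ} :
    G.CliqueFree n ↔ H.CliqueFree n :=
  ⟨CliqueFree.comap ⟨e.symm.toCopy⟩, CliqueFree.comap ⟨e.toCopy⟩⟩

lemma comap_sup_edge {W : Type} {f : W → V} (hf : f.Injective) (a b : W) :
    G.comap f ⊔ edge a b = (G ⊔ edge (f a) (f b)).comap f := by
  ext c d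
  simp [edge_adj, hf.eq_iff, hf.ne_iff]

end SimpleGraph

structure IsIndepTransversal {V : Type} {k : ℕ} (G : SimpleGraph V) (P : V → Fin k)
    (x : Fin k → V) : Prop where
  part_eq : ∀ i, P (x i) = i
  not_adj : ∀ i j, ¬ G.Adj (x i) (x j)

namespace PartiteSaturated

variable {V W : Type} {k r : ℕ} {G : SimpleGraph V} {P : V → Fin k} {x : Fin k → V} {u v : V}
  {i j : Fin k} {s s' c : V}

lemma comap (hG : PartiteSaturated k r G P) (e : W ≃ V) :
    PartiteSaturated k r (G.comap e) (P ∘ e) := by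
  obtain ⟨hpart, hfree, hsat⟩ := hG
  refine ⟨fun a b ↦ hpart (e a) (e b), (Iso.comap e G).cliqueFree_iff.mpr hfree,
    fun a b hab h ↦ ?_⟩
  rw [show fromEdgeSet {s(a, b)} = edge a b from rfl, comap_sup_edge e.injective,
    (Iso.comap e _).cliqueFree_iff]
  exact hsat _ _ hab h

lemma exists_adj_adj (hG : PartiteSaturated k 3 G P) (huv : P u ≠ P v) (h : ¬ G.Adj u v) :
    ∃ w, G.Adj u w ∧ G.Adj v w :=
  hG.2.1.exists_adj_adj_of_not_cliqueFree_sup_edge (hG.2.2 u v huv h)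

lemma of_exists_adj_adj (hpart : ∀ u v, G.Adj u v → P u ≠ P v) (hfree : G.CliqueFree 3)
    (hsat : ∀ u v, P u ≠ P v → ¬ G.Adj u v → ∃ w, G.Adj u w ∧ G.Adj v w) :
    PartiteSaturated k 3 G P := by
  refine ⟨hpart, hfree, fun u v huv h ↦ ?_⟩
  obtain ⟨w, hu, hv⟩ := hsat u v huv h
  exact not_cliqueFree_sup_edge_of_adj_adj (fun h ↦ huv (congrArg P h)) hu hv

lemma not_adj_transversal_part (hG : PartiteSaturated k r G P) (hX : IsIndepTransversal G P x)
    (v : V) : ¬ G.Adj (x (P v)) v :=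
  fun h ↦ hG.1 _ _ h (hX.part_eq _)

lemma exists_adj_adj_transversal (hG : PartiteSaturated k 3 G P) (hX : IsIndepTransversal G P x)
    (hij : i ≠ j) : ∃ w, G.Adj (x i) w ∧ G.Adj (x j) w :=
  hG.exists_adj_adj (by simpa [hX.part_eq] using hij) (hX.not_adj i j)

lemma exists_adj_adj_transversal_of_not_adj (hG : PartiteSaturated k 3 G P)
    (hX : IsIndepTransversal G P x) {v : V} (hv : P v ≠ i) (h : ¬ G.Adj (x i) v) :
    ∃ w, G.Adj (x i) w ∧ G.Adj v w :=
  hG.exists_adj_adj (by rw [hX.part_eq]; exact hv.symm) h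

variable [Finite V]

/-- If `x i` had a single neighbour `w`, every other `x j` would have to be adjacent to `w`,
including `x (P w)`. -/
lemma two_le_ncard_neighborSet (hG : PartiteSaturated k 3 G P) (hX : IsIndepTransversal G P x)
    (hk : 2 ≤ k) (i : Fin k) : 2 ≤ (G.neighborSet (x i)).ncard := by
  have : Nontrivial (Fin k) := Fin.nontrivial_iff_two_le.mpr hk
  obtain ⟨j, hji⟩ := exists_ne i
  obtain ⟨w, hiw, -⟩ := hG.exists_adj_adj_transversal hX hji.symm
  by_contra! hlt
  have hN : ∀ u ∈ G.neighborSet (x i), u = w :=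
    fun u hu ↦ (Set.ncard_le_one_iff).mp (by omega) hu hiw
  have hall : ∀ j, G.Adj (x j) w := by
    intro j
    rcases eq_or_ne j i with rfl | hji
    · exact hiw
    · obtain ⟨u, hiu, hju⟩ := hG.exists_adj_adj_transversal hX hji.symm
      exact hN u hiu ▸ hju
  exact hG.not_adj_transversal_part hX w (hall _)

lemma three_le_ncard_neighborSet_of_adj_of_not_adj (hG : PartiteSaturated k 3 G P)
    (hX : IsIndepTransversal G P x) (hss' : ¬ G.Adj s s') (hs : G.Adj (x j) s)
    (hs' : ¬ G.Adj (x j) s') (hps' : G.Adj (x (P s)) s') (hj : j ≠ P s) (hj' : j ≠ P s') :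
    3 ≤ (G.neighborSet (x j)).ncard := by
  obtain ⟨c, hjc, hpc⟩ := hG.exists_adj_adj_transversal hX hj
  obtain ⟨t, hjt, hs't⟩ := hG.exists_adj_adj_transversal_of_not_adj hX hj'.symm hs'
  refine (Set.two_lt_ncard).mpr ⟨s, hs, c, hjc, t, hjt, ?_, ?_, ?_⟩
  · rintro rfl
    exact hG.not_adj_transversal_part hX s hpc
  · rintro rfl
    exact hss' hs't.symm
  · rintro rfl
    exact hG.2.1.not_adj_of_adj_of_adj hpc hps' hs't.symm

lemma three_le_ncard_neighborSet_of_adj_of_adj (hG : PartiteSaturated k 3 G P)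
    (hX : IsIndepTransversal G P x) (hs : G.Adj (x j) s) (hs' : G.Adj (x j) s') (hss' : s ≠ s')
    (hcs : c ≠ s) (hcs' : c ≠ s') (hcs_adj : ¬ G.Adj c s) (hcs'_adj : ¬ G.Adj c s')
    (hc : P c ≠ j) : 3 ≤ (G.neighborSet (x j)).ncard := by
  obtain ⟨t, hjt, hts, hts'⟩ : ∃ t, G.Adj (x j) t ∧ t ≠ s ∧ t ≠ s' := by
    by_cases hjc : G.Adj (x j) c
    · exact ⟨c, hjc, hcs, hcs'⟩
    obtain ⟨t, hjt, hct⟩ := hG.exists_adj_adj_transversal_of_not_adj hX hc hjc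
    exact ⟨t, hjt, fun h ↦ hcs_adj (h ▸ hct), fun h ↦ hcs'_adj (h ▸ hct)⟩
  exact (Set.two_lt_ncard).mpr ⟨s, hs, s', hs', t, hjt, hss', hts.symm, hts'.symm⟩

lemma exists_card_le_three_of_neighborSet_eq_pair (hG : PartiteSaturated k 3 G P)
    (hX : IsIndepTransversal G P x) (hN : G.neighborSet (x i) = {s, s'}) :
    ∃ E : Finset (Fin k), E.card ≤ 3 ∧ ∀ j ∉ E, 3 ≤ (G.neighborSet (x j)).ncard := by
  have hs : G.Adj (x i) s := by simp [← mem_neighborSet, hN]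
  have hs' : G.Adj (x i) s' := by simp [← mem_neighborSet, hN]
  have hcover : ∀ j, G.Adj (x j) s ∨ G.Adj (x j) s' := by
    intro j
    rcases eq_or_ne j i with rfl | hji
    · exact Or.inl hs
    obtain ⟨w, hiw, hjw⟩ := hG.exists_adj_adj_transversal hX hji.symm
    rcases (by simpa [← mem_neighborSet, hN] using hiw : w = s ∨ w = s') with rfl | rfl
    exacts [Or.inl hjw, Or.inr hjw]
  have hss' : ¬ G.Adj s s' := hG.2.1.not_adj_of_adj_of_adj hs hs'
  have hps' : G.Adj (x (P s)) s' := (hcover _).resolve_left (hG.not_adj_transversal_part hX s)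
  have hp's : G.Adj (x (P s')) s := (hcover _).resolve_right (hG.not_adj_transversal_part hX s')
  have hne : s ≠ s' := by
    rintro rfl
    exact hG.not_adj_transversal_part hX s hps'
  have hpp' : P s ≠ P s' := fun h ↦ hG.not_adj_transversal_part hX s' (h ▸ hps')
  obtain ⟨c, hpc, hp'c⟩ := hG.exists_adj_adj_transversal hX hpp'
  refine ⟨{P s, P s', P c}, Finset.card_le_three, fun j hj ↦ ?_⟩
  simp only [Finset.mem_insert, Finset.mem_singleton, not_or] at hj
  obtain ⟨hjs, hjs', hjc⟩ := hj
  by_cases hjs_adj : G.Adj (x j) s <;> by_cases hjs'_adj : G.Adj (x j) s'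
  · refine hG.three_le_ncard_neighborSet_of_adj_of_adj hX hjs_adj hjs'_adj hne ?_ ?_
      (hG.2.1.not_adj_of_adj_of_adj hp'c hp's) (hG.2.1.not_adj_of_adj_of_adj hpc hps')
      (Ne.symm hjc)
    · rintro rfl
      exact hG.not_adj_transversal_part hX c hpc
    · rintro rfl
      exact hG.not_adj_transversal_part hX c hp'c
  · exact hG.three_le_ncard_neighborSet_of_adj_of_not_adj hX hss' hjs_adj hjs'_adj hps' hjs hjs'
  · exact hG.three_le_ncard_neighborSet_of_adj_of_not_adj hX (fun h ↦ hss' h.symm) hjs'_adj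
      hjs_adj hp's hjs' hjs
  · exact ((hcover j).elim hjs_adj hjs'_adj).elim

lemma exists_card_le_three (hG : PartiteSaturated k 3 G P) (hX : IsIndepTransversal G P x)
    (hk : 2 ≤ k) :
    ∃ E : Finset (Fin k), E.card ≤ 3 ∧ ∀ j ∉ E, 3 ≤ (G.neighborSet (x j)).ncard := by
  by_cases h : ∀ j, 3 ≤ (G.neighborSet (x j)).ncard
  · exact ⟨∅, by simp, fun j _ ↦ h j⟩
  obtain ⟨i, hi⟩ := not_forall.mp h
  have h2 : (G.neighborSet (x i)).ncard = 2 := by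
    have := hG.two_le_ncard_neighborSet hX hk i
    omega
  obtain ⟨s, s', -, hN⟩ := Set.ncard_eq_two.mp h2
  exact hG.exists_card_le_three_of_neighborSet_eq_pair hX hN

end PartiteSaturated

lemma add_one_mul_card_le_sum_add_card {ι : Type*} [Fintype ι] {n : ℕ} (d : ι → ℕ)
    (E : Finset ι) (hle : ∀ j, n ≤ d j) (hlt : ∀ j ∉ E, n + 1 ≤ d j) :
    (n + 1) * Fintype.card ι ≤ ∑ j, d j + E.card := by
  classical
  calc (n + 1) * Fintype.card ι = ∑ _j : ι, (n + 1) := by simp [mul_comm]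
    _ ≤ ∑ j, (d j + if j ∈ E then 1 else 0) := by
        refine Finset.sum_le_sum fun j _ ↦ ?_
        by_cases hj : j ∈ E
        · simp [hj, hle j]
        · simp [hj, hlt j hj]
    _ = ∑ j, d j + E.card := by simp [Finset.sum_add_distrib]

lemma AlphaWitness.three_mul_pred_le {k m : ℕ} (hw : AlphaWitness k 3 m) : 3 * (k - 1) ≤ m := by
  obtain ⟨n, G, P, x, hG, hx, hind, rfl⟩ := hw
  have hX : IsIndepTransversal G P x := ⟨hx, hind⟩
  rcases lt_or_ge k 2 with hk | hk
  · omega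
  obtain ⟨E, hE, hdeg⟩ := hG.exists_card_le_three hX hk
  have := add_one_mul_card_le_sum_add_card _ E (hG.two_le_ncard_neighborSet hX hk) hdeg
  simp only [Fintype.card_fin] at this
  omega

lemma alphaWitness_of_partiteSaturated {V : Type} [Fintype V] {k r : ℕ} {G : SimpleGraph V}
    {P : V → Fin k} {x : Fin k → V} (hG : PartiteSaturated k r G P)
    (hX : IsIndepTransversal G P x) : AlphaWitness k r (∑ i, (G.neighborSet (x i)).ncard) := by
  set e := (Fintype.equivFin V).symm
  refine ⟨_, G.comap e, P ∘ e, e.symm ∘ x, hG.comap e, by simpa using hX.part_eq,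
    by simpa using hX.not_adj, Finset.sum_congr rfl fun i _ ↦ ?_⟩
  have hN : (G.comap e).neighborSet (e.symm (x i)) = e ⁻¹' G.neighborSet (x i) := by ext; simp
  simp only [Function.comp_apply, hN,
    Set.ncard_preimage_of_injective_subset_range e.injective (by simp)]

def extremalGraph (k : ℕ) : SimpleGraph (Fin k ⊕ Fin 3) :=
  fromRel fun a b ↦ ∃ (i : Fin k) (t : Fin 3), a = .inl i ∧ b = .inr t ∧ (i : ℕ) ≠ t

namespace extremalGraph

variable {k : ℕ}

@[simp] lemma adj_inl_inr (i : Fin k) (t : Fin 3) :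
    (extremalGraph k).Adj (.inl i) (.inr t) ↔ (i : ℕ) ≠ t := by
  simp [extremalGraph]

@[simp] lemma adj_inr_inl (t : Fin 3) (i : Fin k) :
    (extremalGraph k).Adj (.inr t) (.inl i) ↔ (i : ℕ) ≠ t := by
  simp [extremalGraph]

@[simp] lemma not_adj_inl_inl (i j : Fin k) : ¬ (extremalGraph k).Adj (.inl i) (.inl j) := by
  simp [extremalGraph]

@[simp] lemma not_adj_inr_inr (t u : Fin 3) : ¬ (extremalGraph k).Adj (.inr t) (.inr u) := by
  simp [extremalGraph]

lemma cliqueFree_three : (extremalGraph k).CliqueFree 3 := by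
  have hc : (extremalGraph k).Coloring Bool := Coloring.mk Sum.isLeft <| by
    rintro (i | t) (j | u) h <;> simp_all
  exact hc.colorable.cliqueFree (by simp)

lemma exists_fin_three_ne (a b : ℕ) : ∃ t : Fin 3, (t : ℕ) ≠ a ∧ (t : ℕ) ≠ b := by
  by_cases h0 : a ≠ 0 ∧ b ≠ 0
  · exact ⟨0, by simp; omega⟩
  by_cases h1 : a ≠ 1 ∧ b ≠ 1
  · exact ⟨1, by simp; omega⟩
  exact ⟨2, by simp; omega⟩

lemma partiteSaturated (hk : 3 ≤ k) :
    PartiteSaturated k 3 (extremalGraph k) (Sum.elim id (Fin.castLE hk)) := by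
  refine PartiteSaturated.of_exists_adj_adj ?_ cliqueFree_three ?_
  · rintro (i | t) (j | u) h <;> simp_all [Fin.ext_iff, eq_comm]
  · rintro (i | t) (j | u) hP h
    · obtain ⟨t, hti, htj⟩ := exists_fin_three_ne i j
      exact ⟨.inr t, by simpa using hti.symm, by simpa using htj.symm⟩
    · simp_all [Fin.ext_iff]
    · simp_all [Fin.ext_iff]
    · obtain ⟨i, hit, hiu⟩ := exists_fin_three_ne t u
      exact ⟨.inl (Fin.castLE hk i), by simpa using hit, by simpa using hiu⟩

open Finset in
lemma sum_ncard_neighborSet_inl (hk : 3 ≤ k) :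
    ∑ i : Fin k, ((extremalGraph k).neighborSet (.inl i)).ncard = 3 * (k - 1) := by
  set r : Fin k → Fin 3 → Prop := fun i t ↦ (i : ℕ) ≠ t
  have hN : ∀ i, ((extremalGraph k).neighborSet (.inl i)).ncard = #(univ.bipartiteAbove r i) := by
    intro i
    rw [show (extremalGraph k).neighborSet (.inl i) = Sum.inr '' ↑(univ.bipartiteAbove r i) by
      ext (j | t) <;> simp [r], Set.ncard_image_of_injective _ Sum.inr_injective,
      Set.ncard_coe_finset]
  have hbelow : ∀ t : Fin 3, #(univ.bipartiteBelow r t) = k - 1 := by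
    intro t
    rw [show univ.bipartiteBelow r t = univ.erase (Fin.castLE hk t) by ext; simp [r, Fin.ext_iff],
      card_erase_of_mem (mem_univ _), card_univ, Fintype.card_fin]
  rw [sum_congr rfl fun i _ ↦ hN i, sum_card_bipartiteAbove_eq_sum_card_bipartiteBelow,
    sum_congr rfl fun t _ ↦ hbelow t]
  simp [mul_comm]

end extremalGraph

lemma alphaWitness_three_mul_pred {k : ℕ} (hk : 3 ≤ k) : AlphaWitness k 3 (3 * (k - 1)) := by
  have := alphaWitness_of_partiteSaturated (extremalGraph.partiteSaturated hk)
    (x := Sum.inl) ⟨fun _ ↦ rfl, by simp⟩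
  rwa [extremalGraph.sum_ncard_neighborSet_inl hk] at this

theorem stmt_15 (k : ℕ) (hk : 3 ≤ k) : alpha k 3 = 3 * (k - 1) :=
  le_antisymm (Nat.sInf_le (alphaWitness_three_mul_pred hk))
    (le_csInf ⟨_, alphaWitness_three_mul_pred hk⟩ fun _ ↦ AlphaWitness.three_mul_pred_le)
end
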